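/- arXiv:1711.05937 — 7 statements merged into one kernel-verified Lean document; each statement's English description precedes it below -/
import Mathlib

section
/- Let P(x,y,z) be a nonzero polynomial in three complex variables that is translation invariant, i.e. P(x+c,y+c,z+c)=P(x,y,z) for all c. Let D_{xy} be the order of vanishing of P along the divisor x=y (the largest power of (x-y) dividing P), and similarly D_{xz}, D_{yz}. Write P = (x-y)^{D_{xy}}(x-z)^{D_{xz}}(y-z)^{D_{yz}} Q. Then, viewing P as a polynomial in the variables (x-y, x-z), the lowest-degree homogeneous part of P in these variables has degree at least D_{xy}+D_{xz}+D_{yz}. -/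
open MvPolynomial

noncomputable section

private lemma stmt0_prime_map {A B : Type*} [CommMonoidWithZero A] [CommMonoidWithZero B]
    (e : A ≃* B) {p : A} (hp : Prime p) : Prime (e p) := (MulEquiv.prime_iff e).mpr hp

private lemma stmt0_prime_X (i : Fin 3) : Prime (X i : MvPolynomial (Fin 3) ℂ) := by
  have h0 : Prime (X 0 : MvPolynomial (Fin 3) ℂ) := by
    rw [← MulEquiv.prime_iff (MvPolynomial.finSuccEquiv ℂ 2).toRingEquiv.toMulEquiv]
    simpa [MvPolynomial.finSuccEquiv_X_zero] using Polynomial.prime_X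
  have h := stmt0_prime_map
    (MvPolynomial.renameEquiv ℂ (Equiv.swap (0 : Fin 3) i)).toRingEquiv.toMulEquiv h0
  simpa [Equiv.swap_apply_left] using h

private lemma stmt0_prime_sub : Prime (X 2 - X 1 : MvPolynomial (Fin 3) ℂ) := by
  have hc1 : (MvPolynomial.aeval (fun i : Fin 3 => if i = 2 then X 2 - X 1 else X i)).comp
      (MvPolynomial.aeval (fun i : Fin 3 => if i = 2 then X 2 + X 1 else X i))
      = AlgHom.id ℂ (MvPolynomial (Fin 3) ℂ) := by
    apply MvPolynomial.algHom_ext; intro i; fin_cases i <;> simp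
  have hc2 : (MvPolynomial.aeval (fun i : Fin 3 => if i = 2 then X 2 + X 1 else X i)).comp
      (MvPolynomial.aeval (fun i : Fin 3 => if i = 2 then X 2 - X 1 else X i))
      = AlgHom.id ℂ (MvPolynomial (Fin 3) ℂ) := by
    apply MvPolynomial.algHom_ext; intro i; fin_cases i <;> simp
  set e : MvPolynomial (Fin 3) ℂ ≃ₐ[ℂ] MvPolynomial (Fin 3) ℂ :=
    AlgEquiv.ofAlgHom _ _ hc1 hc2 with he
  have h := stmt0_prime_map e.toRingEquiv.toMulEquiv (stmt0_prime_X 2)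
  have : e (X 2) = X 2 - X 1 := by simp [he]
  rw [show (X 2 - X 1 : MvPolynomial (Fin 3) ℂ) = e (X 2) from this.symm]
  exact h

private lemma stmt0_not_dvd {p q : MvPolynomial (Fin 3) ℂ} (v : Fin 3 → ℂ)
    (hp : MvPolynomial.eval v p = 0) (hq : MvPolynomial.eval v q ≠ 0) : ¬ p ∣ q := by
  rintro ⟨t, rfl⟩
  simp [hp] at hq

/-- for a nonzero translation invariant `P(x,y,z)` with orders of
vanishing `D_{xy}, D_{xz}, D_{yz}` along the three diagonals, after the change of
variables `x = s, y = s - u, z = s - v` (so `u = x - y`, `v = x - z`), every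
monomial of the resulting polynomial has degree at least `D_{xy}+D_{xz}+D_{yz}`
in `(u, v)`; i.e. the lowest homogeneous part of `P` in `(x-y, x-z)` has degree
at least `D_{xy}+D_{xz}+D_{yz}`. -/
theorem stmt0 (P : MvPolynomial (Fin 3) ℂ) (hP : P ≠ 0)
    (hTI : ∀ c : ℂ, MvPolynomial.aeval (fun i : Fin 3 => X i + MvPolynomial.C c) P = P)
    (Dxy Dxz Dyz : ℕ)
    (hxy : (X 0 - X 1 : MvPolynomial (Fin 3) ℂ) ^ Dxy ∣ P ∧
      ¬ (X 0 - X 1 : MvPolynomial (Fin 3) ℂ) ^ (Dxy + 1) ∣ P)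
    (hxz : (X 0 - X 2 : MvPolynomial (Fin 3) ℂ) ^ Dxz ∣ P ∧
      ¬ (X 0 - X 2 : MvPolynomial (Fin 3) ℂ) ^ (Dxz + 1) ∣ P)
    (hyz : (X 1 - X 2 : MvPolynomial (Fin 3) ℂ) ^ Dyz ∣ P ∧
      ¬ (X 1 - X 2 : MvPolynomial (Fin 3) ℂ) ^ (Dyz + 1) ∣ P) :
    ∀ mo ∈ (MvPolynomial.aeval (fun i : Fin 3 =>
        if i = 0 then (X 0 : MvPolynomial (Fin 3) ℂ)
        else if i = 1 then X 0 - X 1 else X 0 - X 2) P).support,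
      Dxy + Dxz + Dyz ≤ mo 1 + mo 2 := by
  set φ := (MvPolynomial.aeval (fun i : Fin 3 =>
    if i = 0 then (X 0 : MvPolynomial (Fin 3) ℂ)
    else if i = 1 then X 0 - X 1 else X 0 - X 2) :
    MvPolynomial (Fin 3) ℂ →ₐ[ℂ] MvPolynomial (Fin 3) ℂ) with hφdef
  -- images of the three linear forms
  have e1 : φ (X 0 - X 1) = X 1 := by simp [hφdef]
  have e2 : φ (X 0 - X 2) = X 2 := by simp [hφdef]
  have e3 : φ (X 1 - X 2) = X 2 - X 1 := by
    have : φ (X 1 - X 2) = φ (X 0 - X 2) - φ (X 0 - X 1) := by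
      rw [← map_sub]; ring_nf
    rw [this, e1, e2]
  -- divisibilities after substitution
  have h1 : (X 1 : MvPolynomial (Fin 3) ℂ) ^ Dxy ∣ φ P := by
    have := map_dvd φ hxy.1; rwa [map_pow, e1] at this
  have h2 : (X 2 : MvPolynomial (Fin 3) ℂ) ^ Dxz ∣ φ P := by
    have := map_dvd φ hxz.1; rwa [map_pow, e2] at this
  have h3 : (X 2 - X 1 : MvPolynomial (Fin 3) ℂ) ^ Dyz ∣ φ P := by
    have := map_dvd φ hyz.1; rwa [map_pow, e3] at this
  -- non-divisibility of primes
  have nd21 : ¬ (X 2 : MvPolynomial (Fin 3) ℂ) ∣ X 1 :=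
    stmt0_not_dvd (fun i => if i = 2 then 0 else 1) (by simp) (by simp)
  have nds1 : ¬ (X 2 - X 1 : MvPolynomial (Fin 3) ℂ) ∣ X 1 :=
    stmt0_not_dvd (fun i => 1) (by simp) (by simp)
  have nds2 : ¬ (X 2 - X 1 : MvPolynomial (Fin 3) ℂ) ∣ X 2 :=
    stmt0_not_dvd (fun i => 1) (by simp) (by simp)
  -- peel the factors
  obtain ⟨m, hm⟩ := h1
  have h2' : (X 2 : MvPolynomial (Fin 3) ℂ) ^ Dxz ∣ m := by
    refine (stmt0_prime_X 2).pow_dvd_of_dvd_mul_left _ ?_ (hm ▸ h2)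
    exact fun hd => nd21 ((stmt0_prime_X 2).dvd_of_dvd_pow hd)
  obtain ⟨m', hm'⟩ := h2'
  have h3' : (X 2 - X 1 : MvPolynomial (Fin 3) ℂ) ^ Dyz ∣ m' := by
    have hh : (X 2 - X 1 : MvPolynomial (Fin 3) ℂ) ^ Dyz ∣
        (X 1) ^ Dxy * ((X 2) ^ Dxz * m') := by rw [← hm', ← hm]; exact h3
    have step1 := stmt0_prime_sub.pow_dvd_of_dvd_mul_left _
      (fun hd => nds1 (stmt0_prime_sub.dvd_of_dvd_pow hd)) hh
    exact stmt0_prime_sub.pow_dvd_of_dvd_mul_left _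
      (fun hd => nds2 (stmt0_prime_sub.dvd_of_dvd_pow hd)) step1
  obtain ⟨w, hw⟩ := h3'
  have hfact : φ P = ((X 1) ^ Dxy * (X 2) ^ Dxz * (X 2 - X 1) ^ Dyz) * w := by
    rw [hm, hm', hw]; ring
  -- weighted homogeneity of the prefactor
  set wt : Fin 3 → ℕ := fun i => if i = 0 then 0 else 1 with hwt
  have hS : IsWeightedHomogeneous wt
      ((X 1 : MvPolynomial (Fin 3) ℂ) ^ Dxy * (X 2) ^ Dxz * (X 2 - X 1) ^ Dyz)
      (Dxy + Dxz + Dyz) := by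
    have hx1 : IsWeightedHomogeneous wt (X 1 : MvPolynomial (Fin 3) ℂ) 1 := by
      simpa [hwt] using isWeightedHomogeneous_X ℂ wt 1
    have hx2 : IsWeightedHomogeneous wt (X 2 : MvPolynomial (Fin 3) ℂ) 1 := by
      simpa [hwt] using isWeightedHomogeneous_X ℂ wt 2
    have hsub : IsWeightedHomogeneous wt (X 2 - X 1 : MvPolynomial (Fin 3) ℂ) 1 := by
      rw [← mem_weightedHomogeneousSubmodule]
      exact Submodule.sub_mem _ hx2 hx1
    have hpow : ∀ (p : MvPolynomial (Fin 3) ℂ) (n : ℕ),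
        IsWeightedHomogeneous wt p 1 → IsWeightedHomogeneous wt (p ^ n) n := by
      intro p n hp
      induction n with
      | zero => simpa using isWeightedHomogeneous_one ℂ wt
      | succ k ih => rw [pow_succ]; exact ih.mul hp
    exact (((hpow _ _ hx1).mul (hpow _ _ hx2)).mul (hpow _ _ hsub))
  intro mo hmo
  rw [hfact] at hmo
  have hmem := MvPolynomial.support_mul _ _ hmo
  rw [Finset.mem_add] at hmem
  obtain ⟨a, ha, b, hb, rfl⟩ := hmem
  have hwa : (Finsupp.weight wt) a = Dxy + Dxz + Dyz :=
    hS (MvPolynomial.mem_support_iff.mp ha)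
  have haw : (Finsupp.weight wt) a = a 1 + a 2 := by
    rw [Finsupp.weight_apply, Finsupp.sum_fintype _ _ (by simp)]
    simp [Fin.sum_univ_three, hwt]
  have h12 : (a + b) 1 = a 1 + b 1 := Finsupp.add_apply a b 1
  have h22 : (a + b) 2 = a 2 + b 2 := Finsupp.add_apply a b 2
  rw [h12, h22]
  omega
end
end

section
/- Let P be a polynomial in variables z^{(a)}, z^{(b)}, z^{(c)} (and possibly more variables). Let D_{b,c} be the largest power of (z^{(b)}-z^{(c)}) dividing P. Let P_der be the coefficient of (z^{(b)}-z^{(c)})^{D_{b,c}} in the expansion of P in powers of (z^{(b)}-z^{(c)}), where P is rewritten in terms of z^{(b)}-z^{(c)} and the weighted center of mass z^{(b+c)} = (b·z^{(b)} + c·z^{(c)})/(b+c). Let D_{a,b} and D_{a,c} be the largest powers of (z^{(a)}-z^{(b)}) and (z^{(a)}-z^{(c)}) dividing P, and let D_{a,b+c} be the largest power of (z^{(a)}-z^{(b+c)}) dividing P_der. Then D_{a,b+c} ≥ D_{a,b} + D_{a,c}. -/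
/-!
With `z = z^{(b+c)}`, the change of coordinates `z^{(b)} = z + c w / (b+c)`,
`z^{(c)} = z - b w / (b+c)` is a ring map `φ`, and setting `w = 0` afterwards sends both
`φ (z^{(a)} - z^{(b)})` and `φ (z^{(a)} - z^{(c)})` to `z^{(a)} - z`.
Since `z^{(a)} - z^{(b)}` and `z^{(a)} - z^{(c)}` are non-associated primes, their product
`Q = (z^{(a)} - z^{(b)})^{D_{a,b}} (z^{(a)} - z^{(c)})^{D_{a,c}}` divides `P`, so `φ Q` divides
`w^{D_{b,c}} M`. As `φ Q` does not vanish at `w = 0`, it is coprime to the prime `w`, hence divides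
`M`, and setting `w = 0` gives `(z^{(a)} - z)^{D_{a,b} + D_{a,c}} ∣ P_der`.
-/

open MvPolynomial

theorem not_dvd_of_map_eq_zero {F R S : Type*} [Semigroup R] [SemigroupWithZero S]
    [FunLike F R S] [MulHomClass F R S] (f : F) {p q : R} (hp : f p = 0) (hq : f q ≠ 0) :
    ¬ p ∣ q :=
  fun h => hq (zero_dvd_iff.mp (hp ▸ map_dvd f h))

namespace MvPolynomial

variable {R τ : Type*} [CommRing R] [IsDomain R]

theorem prime_X_sub_X {i j : τ} (hij : i ≠ j) : Prime (X i - X j : MvPolynomial τ R) := by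
  classical
  let Φ := (renameEquiv R (Equiv.optionSubtypeNe i).symm).trans
    (optionEquivLeft R {k : τ // k ≠ i})
  have hΦ : Φ (X i - X j) = Polynomial.X - Polynomial.C (X ⟨j, hij.symm⟩) := by
    simp [Φ, Equiv.optionSubtypeNe_symm_of_ne hij.symm,
      optionEquivLeft_X_none, optionEquivLeft_X_some]
  refine (MulEquiv.prime_iff Φ).mp ?_
  change Prime (Φ _)
  rw [hΦ]
  exact Polynomial.prime_X_sub_C _

theorem isRelPrime_X_sub_X {i j k : τ} (hij : i ≠ j) (hik : i ≠ k) (hjk : j ≠ k) :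
    IsRelPrime (X i - X j : MvPolynomial τ R) (X i - X k) := by
  classical
  refine (prime_X_sub_X hij).irreducible.isRelPrime_iff_not_dvd.mpr ?_
  refine not_dvd_of_map_eq_zero (rename (Function.update id j i))
    (by simp [Function.update_of_ne hij]) ?_
  simpa [Function.update_of_ne hij, Function.update_of_ne hjk.symm, sub_eq_zero] using hik

end MvPolynomial

theorem stmt1_general {σ : Type*} [DecidableEq σ] (b c : ℕ)
    (P : MvPolynomial (Fin 3 ⊕ σ) ℂ)
    (Dab Dac Dbc Dabc : ℕ)
    (hDab : (X (Sum.inl 0) - X (Sum.inl 1) : MvPolynomial (Fin 3 ⊕ σ) ℂ) ^ Dab ∣ P ∧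
      ¬ (X (Sum.inl 0) - X (Sum.inl 1) : MvPolynomial (Fin 3 ⊕ σ) ℂ) ^ (Dab + 1) ∣ P)
    (hDac : (X (Sum.inl 0) - X (Sum.inl 2) : MvPolynomial (Fin 3 ⊕ σ) ℂ) ^ Dac ∣ P ∧
      ¬ (X (Sum.inl 0) - X (Sum.inl 2) : MvPolynomial (Fin 3 ⊕ σ) ℂ) ^ (Dac + 1) ∣ P)
    (M : MvPolynomial (Fin 3 ⊕ σ) ℂ)
    (hM : MvPolynomial.aeval (fun v : Fin 3 ⊕ σ =>
        if v = Sum.inl 1 then X (Sum.inl 2) + MvPolynomial.C ((c : ℂ) / (b + c)) * X (Sum.inl 1)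
        else if v = Sum.inl 2 then X (Sum.inl 2) - MvPolynomial.C ((b : ℂ) / (b + c)) * X (Sum.inl 1)
        else X v) P = X (Sum.inl 1) ^ Dbc * M)
    (Pder : MvPolynomial (Fin 3 ⊕ σ) ℂ)
    (hPder : Pder = MvPolynomial.aeval (fun v : Fin 3 ⊕ σ =>
        if v = Sum.inl 1 then 0 else X v) M)
    (hDabc : (X (Sum.inl 0) - X (Sum.inl 2) : MvPolynomial (Fin 3 ⊕ σ) ℂ) ^ Dabc ∣ Pder ∧
      ¬ (X (Sum.inl 0) - X (Sum.inl 2) : MvPolynomial (Fin 3 ⊕ σ) ℂ) ^ (Dabc + 1) ∣ Pder) :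
    Dab + Dac ≤ Dabc := by
  set φ : MvPolynomial (Fin 3 ⊕ σ) ℂ →ₐ[ℂ] MvPolynomial (Fin 3 ⊕ σ) ℂ := MvPolynomial.aeval
    (fun v : Fin 3 ⊕ σ =>
      if v = Sum.inl 1 then X (Sum.inl 2) + MvPolynomial.C ((c : ℂ) / (b + c)) * X (Sum.inl 1)
      else if v = Sum.inl 2 then X (Sum.inl 2) - MvPolynomial.C ((b : ℂ) / (b + c)) * X (Sum.inl 1)
      else X v)
  set ev₀ : MvPolynomial (Fin 3 ⊕ σ) ℂ →ₐ[ℂ] MvPolynomial (Fin 3 ⊕ σ) ℂ :=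
    MvPolynomial.aeval (fun v : Fin 3 ⊕ σ => if v = Sum.inl 1 then 0 else X v)
  set Q : MvPolynomial (Fin 3 ⊕ σ) ℂ :=
    (X (Sum.inl 0) - X (Sum.inl 1)) ^ Dab * (X (Sum.inl 0) - X (Sum.inl 2)) ^ Dac
  have hQP : Q ∣ P :=
    ((isRelPrime_X_sub_X (by simp) (by simp) (by simp)).pow_left.pow_right).mul_dvd hDab.1 hDac.1
  have hev₀Q : ev₀ (φ Q) = (X (Sum.inl 0) - X (Sum.inl 2)) ^ (Dab + Dac) := by
    simp [Q, φ, ev₀, pow_add]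
  have hev₀Q_ne : ev₀ (φ Q) ≠ 0 := by
    rw [hev₀Q]
    exact pow_ne_zero _ (sub_ne_zero.mpr (X_injective.ne (by simp)))
  have hQM : φ Q ∣ M := by
    have hcop : IsRelPrime (φ Q) (X (Sum.inl 1) ^ Dbc) :=
      (X_prime.irreducible.isRelPrime_iff_not_dvd.mpr
        (not_dvd_of_map_eq_zero ev₀ (by simp [ev₀]) hev₀Q_ne)).pow_left.symm
    exact hcop.dvd_of_dvd_mul_left (hM ▸ map_dvd φ hQP)
  have hPder_dvd : (X (Sum.inl 0) - X (Sum.inl 2)) ^ (Dab + Dac) ∣ Pder :=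
    hPder ▸ hev₀Q ▸ map_dvd ev₀ hQM
  by_contra! hlt
  exact hDabc.2 ((pow_dvd_pow _ hlt).trans hPder_dvd)

/-- concavity: for a polynomial in the cluster variables
`z^{(a)} = X (inl 0)`, `z^{(b)} = X (inl 1)`, `z^{(c)} = X (inl 2)` and possibly
more variables (indexed by `σ`), with `D_{a,b}, D_{a,c}` the orders of vanishing
of `P` along `z^{(a)} = z^{(b)}` and `z^{(a)} = z^{(c)}`, and `D_{a,b+c}` the
order of vanishing along `z^{(a)} = z^{(b+c)}` of the derived polynomial `Pder`
(the coefficient of the minimal power `(z^{(b)}-z^{(c)})^{D_{b,c}}` after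
rewriting in terms of `w = z^{(b)}-z^{(c)}` and the weighted center of mass
`z^{(b+c)} = (b z^{(b)} + c z^{(c)})/(b+c)`), one has `D_{a,b+c} ≥ D_{a,b} + D_{a,c}`.
In the rewritten coordinates the slot `inl 1` holds `w` and `inl 2` holds `z^{(b+c)}`. -/
theorem stmt1 {σ : Type*} [DecidableEq σ] (a b c : ℕ) (ha : 0 < a) (hb : 0 < b) (hc : 0 < c)
    (P : MvPolynomial (Fin 3 ⊕ σ) ℂ)
    (Dab Dac Dbc Dabc : ℕ)
    (hDab : (X (Sum.inl 0) - X (Sum.inl 1) : MvPolynomial (Fin 3 ⊕ σ) ℂ) ^ Dab ∣ P ∧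
      ¬ (X (Sum.inl 0) - X (Sum.inl 1) : MvPolynomial (Fin 3 ⊕ σ) ℂ) ^ (Dab + 1) ∣ P)
    (hDac : (X (Sum.inl 0) - X (Sum.inl 2) : MvPolynomial (Fin 3 ⊕ σ) ℂ) ^ Dac ∣ P ∧
      ¬ (X (Sum.inl 0) - X (Sum.inl 2) : MvPolynomial (Fin 3 ⊕ σ) ℂ) ^ (Dac + 1) ∣ P)
    (M : MvPolynomial (Fin 3 ⊕ σ) ℂ)
    (hM : MvPolynomial.aeval (fun v : Fin 3 ⊕ σ =>
        if v = Sum.inl 1 then X (Sum.inl 2) + MvPolynomial.C ((c : ℂ) / (b + c)) * X (Sum.inl 1)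
        else if v = Sum.inl 2 then X (Sum.inl 2) - MvPolynomial.C ((b : ℂ) / (b + c)) * X (Sum.inl 1)
        else X v) P = X (Sum.inl 1) ^ Dbc * M)
    (hMmax : ¬ (X (Sum.inl 1) : MvPolynomial (Fin 3 ⊕ σ) ℂ) ∣ M)
    (Pder : MvPolynomial (Fin 3 ⊕ σ) ℂ)
    (hPder : Pder = MvPolynomial.aeval (fun v : Fin 3 ⊕ σ =>
        if v = Sum.inl 1 then 0 else X v) M)
    (hDabc : (X (Sum.inl 0) - X (Sum.inl 2) : MvPolynomial (Fin 3 ⊕ σ) ℂ) ^ Dabc ∣ Pder ∧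
      ¬ (X (Sum.inl 0) - X (Sum.inl 2) : MvPolynomial (Fin 3 ⊕ σ) ℂ) ^ (Dabc + 1) ∣ Pder) :
    Dab + Dac ≤ Dabc :=
  stmt1_general b c P Dab Dac Dbc Dabc hDab hDac M hM Pder hPder hDabc
end

section
/- Let P(z_1,...,z_N) be any polynomial and fix a ≤ N. Substitute z_i = z + λξ_i for i = 1,...,a with Σξ_i = 0, expand P = Σ_m λ^m Q^m, and let s be the smallest m with Q^m ≠ 0. Then s ≤ S_a, where S_a is the minimal total degree of P in the variables z_1,...,z_a (minimum over monomials of P of the sum of exponents of z_1,...,z_a). Moreover s = S_a if and only if Q^s is not divisible by z. -/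
/-!
Give `z 1, …, z a` weight 1 and the other `z j` weight 0, and give `λ` and `z` weight 1 in the
target. Every `z + λ ξ i` is homogeneous of weight 1, so the substitution sends the weight-`n`
component `P_n` of `P` to the weight-`n` part of the image: `P_n` contributes to `Q^m` only
terms of `z`-degree `n - m`. The substitution is injective (set `λ = 1` and let `z` be the
centre of mass of `z 1, …, z a`), so `P_{S_a} ≠ 0` yields a nonzero term `λ^m z^(S_a - m)`,
whence `s ≤ m ≤ S_a`. A `z`-free term of `Q^s` can only come from `P_s`; it exists iff
`P_s ≠ 0`, i.e. iff `s = S_a`.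
-/

open MvPolynomial

noncomputable section

/-- Variable type for the fusion of the first `a` variables: `Sum.inl i` are the
auxiliary variables `ξ i`, `Sum.inr none` is the fused variable (center of mass)
`z`, and `Sum.inr (some j)` are the untouched variables `z j` for `a ≤ j`. -/
abbrev FVars (N : ℕ) := Fin N ⊕ Option (Fin N)

/-- The auxiliary variables `ξ i` for `i < a`, with the constraint `∑ ξ i = 0`
imposed by eliminating the last one. -/
def fuseXi (N a : ℕ) (i : Fin N) : MvPolynomial (FVars N) ℂ :=
  if i.val + 1 < a then X (Sum.inl i)
  else -(∑ j ∈ Finset.univ.filter (fun j : Fin N => j.val + 1 < a), X (Sum.inl j))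

/-- Fusion substitution `z i = z + λ * ξ i` for `i < a`, where `λ` is the
polynomial variable and `z = X (Sum.inr none)`. -/
def fuse (N a : ℕ) : MvPolynomial (Fin N) ℂ →ₐ[ℂ] Polynomial (MvPolynomial (FVars N) ℂ) :=
  MvPolynomial.aeval (fun i =>
    if i.val < a then Polynomial.C (X (Sum.inr none)) + Polynomial.X * Polynomial.C (fuseXi N a i)
    else Polynomial.C (X (Sum.inr (some i))))

/-- `Qcoeff N a P m` is the coefficient `Q^m` of `λ^m` in the fusion expansion of `P`. -/
def Qcoeff (N a : ℕ) (P : MvPolynomial (Fin N) ℂ) (m : ℕ) : MvPolynomial (FVars N) ℂ :=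
  (fuse N a P).coeff m

/-- `minDeg N P a` is `S_a`: the minimal total degree of `P` in `z 1, ..., z a`. -/
def minDeg (N : ℕ) (P : MvPolynomial (Fin N) ℂ) (a : ℕ) : ℕ :=
  sInf {d | ∃ mo ∈ P.support, d = ∑ i ∈ Finset.univ.filter (fun i : Fin N => i.val < a), mo i}

/-- Translation invariance of a multivariate polynomial. -/
def TransInv (N : ℕ) (P : MvPolynomial (Fin N) ℂ) : Prop :=
  ∀ c : ℂ, MvPolynomial.aeval (fun i : Fin N => X i + MvPolynomial.C c) P = P

/-- Symmetry of a multivariate polynomial. -/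
def SymmPoly (N : ℕ) (P : MvPolynomial (Fin N) ℂ) : Prop :=
  ∀ σ : Equiv.Perm (Fin N), rename ⇑σ P = P

namespace MvPolynomial

variable {R σ τ M : Type*} [CommSemiring R] [AddCommMonoid M]

theorem IsWeightedHomogeneous.aeval {w : σ → M} {w' : τ → M} {f : σ → MvPolynomial τ R}
    (hf : ∀ i, IsWeightedHomogeneous w' (f i) (w i)) {φ : MvPolynomial σ R} {m : M}
    (hφ : IsWeightedHomogeneous w φ m) : IsWeightedHomogeneous w' (aeval f φ) m := by
  induction hφ using IsWeightedHomogeneous.induction_on with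
  | zero => simpa using isWeightedHomogeneous_zero R w' m
  | add p q _ _ hp hq => simpa using hp.add hq
  | monomial d r hd =>
    rw [aeval_monomial, ← hd, Finsupp.weight_apply, Finsupp.prod, Finsupp.sum]
    exact (IsWeightedHomogeneous.prod _ _ _ fun i _ => (hf i).pow (d i)).C_mul r

theorem weightedHomogeneousComponent_aeval {w : σ → M} {w' : τ → M}
    {f : σ → MvPolynomial τ R} (hf : ∀ i, IsWeightedHomogeneous w' (f i) (w i)) (m : M)
    (φ : MvPolynomial σ R) :
    weightedHomogeneousComponent w' m (aeval f φ)
      = aeval f (weightedHomogeneousComponent w m φ) := by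
  induction φ using MvPolynomial.induction_on' with
  | add p q hp hq => simp only [map_add, hp, hq]
  | monomial d r =>
    have hd := isWeightedHomogeneous_monomial w d r rfl
    by_cases hm : Finsupp.weight w d = m
    · rw [← hm, hd.weightedHomogeneousComponent_same,
        (hd.aeval hf).weightedHomogeneousComponent_same]
    · rw [hd.weightedHomogeneousComponent_ne _ (Ne.symm hm),
        (hd.aeval hf).weightedHomogeneousComponent_ne _ (Ne.symm hm), map_zero]

theorem weightedHomogeneousComponent_ne_zero_iff {w : σ → M} (m : M) (φ : MvPolynomial σ R) :
    weightedHomogeneousComponent w m φ ≠ 0 ↔ ∃ d ∈ φ.support, Finsupp.weight w d = m := by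
  classical
  simp [ne_eq, MvPolynomial.ext_iff, coeff_weightedHomogeneousComponent, and_comm]

theorem X_dvd_iff_forall_mem_support {i : σ} {p : MvPolynomial σ R} :
    X i ∣ p ↔ ∀ d ∈ p.support, d i ≠ 0 := by
  rw [X_dvd_iff_modMonomial_eq_zero, MvPolynomial.ext_iff]
  refine forall_congr' fun d => ?_
  by_cases hd : Finsupp.single i 1 ≤ d
  · have : d i ≠ 0 := Nat.one_le_iff_ne_zero.1 (by simpa using Finsupp.single_le_iff.1 hd)
    simp [coeff_modMonomial_of_le _ hd, this]
  · have : d i = 0 := by simpa [Finsupp.single_le_iff] using hd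
    simp [coeff_modMonomial_of_not_le _ hd, this]

theorem optionEquivLeft_symm_C (p : MvPolynomial σ R) :
    (optionEquivLeft R σ).symm (Polynomial.C p) = rename some p := by
  simp [optionEquivLeft]

end MvPolynomial

open Finset

namespace Fusion

variable {N : ℕ} (a : ℕ)

def fusedWeight (i : Fin N) : ℕ := if i.val < a then 1 else 0

variable (N)

def lambdaZWeight : Option (FVars N) → ℕ
  | none => 1
  | some (Sum.inr none) => 1
  | some _ => 0

-- `fuse`, with `λ` turned into the variable `none`
def fuseMv : MvPolynomial (Fin N) ℂ →ₐ[ℂ] MvPolynomial (Option (FVars N)) ℂ :=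
  (optionEquivLeft ℂ (FVars N)).symm.toAlgHom.comp (fuse N a)

def avg : MvPolynomial (Fin N) ℂ :=
  (a : ℂ)⁻¹ • ∑ i ∈ univ.filter (fun i : Fin N => i.val < a), X i

def unfuse : MvPolynomial (Option (FVars N)) ℂ →ₐ[ℂ] MvPolynomial (Fin N) ℂ :=
  aeval fun
    | none => 1
    | some (Sum.inl i) => X i - avg N a
    | some (Sum.inr none) => avg N a
    | some (Sum.inr (some i)) => X i

variable {N a}

theorem weight_fusedWeight (d : Fin N →₀ ℕ) :
    Finsupp.weight (fusedWeight a) d = ∑ i ∈ univ.filter (fun i : Fin N => i.val < a), d i := by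
  rw [Finsupp.weight_apply, Finsupp.sum_fintype _ _ (fun i => by simp), Finset.sum_filter]
  refine Finset.sum_congr rfl fun i _ => ?_
  rw [smul_eq_mul, fusedWeight]
  split_ifs <;> simp

theorem weight_lambdaZWeight_optionElim (m : ℕ) (d : FVars N →₀ ℕ) :
    Finsupp.weight (lambdaZWeight N) (d.optionElim m) = m + d (Sum.inr none) := by
  simp [Finsupp.weight_apply, Finsupp.sum_fintype, Fintype.sum_option, Fintype.sum_sum_type,
    lambdaZWeight]

theorem sum_X_sub_avg (ha : a ≤ N) :
    ∑ i ∈ univ.filter (fun i : Fin N => i.val < a), (X i - avg N a) = 0 := by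
  rcases Nat.eq_zero_or_pos a with rfl | ha0
  · simp
  have hcard : #(univ.filter (fun i : Fin N => i.val < a)) = a := by
    rw [Fin.card_filter_val_lt, min_eq_right ha]
  rw [Finset.sum_sub_distrib, Finset.sum_const, hcard, avg, ← Nat.cast_smul_eq_nsmul ℂ,
    smul_smul, mul_inv_cancel₀ (by exact_mod_cast ha0.ne'), one_smul, sub_self]

theorem fuseMv_X (i : Fin N) :
    fuseMv N a (X i) = if i.val < a then
      X (some (Sum.inr none)) + X none * rename some (fuseXi N a i)
    else X (some (Sum.inr (some i))) := by
  simp only [fuseMv, fuse, AlgHom.comp_apply, aeval_X]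
  split_ifs
  · simp [optionEquivLeft_symm_C]
    ring
  · simp

theorem isWeightedHomogeneous_fuseMv_X (i : Fin N) :
    IsWeightedHomogeneous (lambdaZWeight N) (fuseMv N a (X i)) (fusedWeight a i) := by
  have hX : ∀ v, IsWeightedHomogeneous (lambdaZWeight N) (X v) (lambdaZWeight N v) :=
    isWeightedHomogeneous_X ℂ _
  have hξ : IsWeightedHomogeneous (lambdaZWeight N) (rename some (fuseXi N a i)) 0 := by
    rw [fuseXi]
    split_ifs
    · rw [rename_X]
      exact hX _
    · rw [map_neg, map_sum]
      exact (IsWeightedHomogeneous.sum _ _ 0 fun j _ => by rw [rename_X]; exact hX _).neg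
  rw [fuseMv_X, fusedWeight]
  split_ifs
  · exact (hX _).add ((hX none).mul hξ)
  · exact hX _

theorem unfuse_rename_fuseXi (ha : a ≤ N) {i : Fin N} (hi : i.val < a) :
    unfuse N a (rename some (fuseXi N a i)) = X i - avg N a := by
  rw [fuseXi]
  split_ifs with hi'
  · simp [unfuse]
  have hA : (univ.filter fun j : Fin N => j.val < a).erase i
      = univ.filter fun j : Fin N => j.val + 1 < a := by
    ext j
    simp only [mem_erase, mem_filter, mem_univ, true_and, ne_eq, Fin.ext_iff]
    omega
  have h := sum_X_sub_avg ha
  rw [← add_sum_erase _ _ (by simpa using hi), hA] at h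
  simp only [unfuse, map_neg, map_sum, aeval_rename, aeval_X, Function.comp_apply]
  linear_combination -h

theorem unfuse_fuseMv (ha : a ≤ N) (P : MvPolynomial (Fin N) ℂ) :
    unfuse N a (fuseMv N a P) = P := by
  suffices (unfuse N a).comp (fuseMv N a) = AlgHom.id ℂ _ from DFunLike.congr_fun this P
  refine MvPolynomial.algHom_ext fun i => ?_
  simp only [AlgHom.comp_apply, fuseMv_X, AlgHom.id_apply]
  split_ifs with hi
  · rw [map_add, map_mul, unfuse_rename_fuseXi ha hi]
    simp [unfuse]
  · simp [unfuse]

theorem coeff_Qcoeff (P : MvPolynomial (Fin N) ℂ) (m : ℕ) (d : FVars N →₀ ℕ) :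
    coeff d (Qcoeff N a P m) = coeff (d.optionElim m) (fuseMv N a P) := by
  rw [← optionEquivLeft_coeff_coeff, fuseMv]
  simp [Qcoeff]

theorem weightedHomogeneousComponent_fuseMv (n : ℕ) (P : MvPolynomial (Fin N) ℂ) :
    weightedHomogeneousComponent (lambdaZWeight N) n (fuseMv N a P)
      = fuseMv N a (weightedHomogeneousComponent (fusedWeight a) n P) := by
  have h : fuseMv N a = aeval fun i => fuseMv N a (X i) := by
    ext i
    simp
  rw [h]
  exact weightedHomogeneousComponent_aeval isWeightedHomogeneous_fuseMv_X n P

theorem weightedHomogeneousComponent_ne_zero_iff_exists_coeff_Qcoeff (ha : a ≤ N)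
    (P : MvPolynomial (Fin N) ℂ) (n : ℕ) :
    weightedHomogeneousComponent (fusedWeight a) n P ≠ 0 ↔
      ∃ m d, m + d (Sum.inr none) = n ∧ coeff d (Qcoeff N a P m) ≠ 0 := by
  have hinj : Function.Injective (fuseMv N a) :=
    Function.LeftInverse.injective (unfuse_fuseMv ha)
  rw [← map_ne_zero_iff _ hinj, ← weightedHomogeneousComponent_fuseMv,
    weightedHomogeneousComponent_ne_zero_iff]
  constructor
  · rintro ⟨μ, hμ, hμn⟩
    rw [← Finsupp.optionElim_some μ, weight_lambdaZWeight_optionElim] at hμn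
    refine ⟨μ none, μ.some, hμn, ?_⟩
    rwa [coeff_Qcoeff, Finsupp.optionElim_some, ← mem_support_iff]
  · rintro ⟨m, d, hmd, hd⟩
    refine ⟨d.optionElim m, ?_, by rw [weight_lambdaZWeight_optionElim, hmd]⟩
    rwa [mem_support_iff, ← coeff_Qcoeff]

theorem minDeg_eq_sInf (P : MvPolynomial (Fin N) ℂ) :
    minDeg N P a = sInf {n | weightedHomogeneousComponent (fusedWeight a) n P ≠ 0} := by
  simp only [minDeg, weightedHomogeneousComponent_ne_zero_iff, weight_fusedWeight, eq_comm]

theorem minDeg_le {P : MvPolynomial (Fin N) ℂ} {n : ℕ}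
    (h : weightedHomogeneousComponent (fusedWeight a) n P ≠ 0) : minDeg N P a ≤ n := by
  rw [minDeg_eq_sInf]
  exact Nat.sInf_le h

theorem weightedHomogeneousComponent_minDeg_ne_zero {P : MvPolynomial (Fin N) ℂ} (hP : P ≠ 0) :
    weightedHomogeneousComponent (fusedWeight a) (minDeg N P a) P ≠ 0 := by
  obtain ⟨d, hd⟩ := support_nonempty.2 hP
  rw [minDeg_eq_sInf]
  exact Nat.sInf_mem (s := {n | weightedHomogeneousComponent (fusedWeight a) n P ≠ 0})
    ⟨_, (weightedHomogeneousComponent_ne_zero_iff _ P).2 ⟨d, hd, rfl⟩⟩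

end Fusion

open Fusion in
/-- the lowest power `s` of `λ` in the fusion expansion of any
polynomial satisfies `s ≤ S_a`, with equality iff `Q^s` is not divisible by `z`. -/
theorem stmt4 (N a : ℕ) (ha : a ≤ N) (P : MvPolynomial (Fin N) ℂ) (s : ℕ)
    (hs : Qcoeff N a P s ≠ 0 ∧ ∀ m < s, Qcoeff N a P m = 0) :
    s ≤ minDeg N P a ∧
      (s = minDeg N P a ↔ ¬ (X (Sum.inr none) : MvPolynomial (FVars N) ℂ) ∣ Qcoeff N a P s) := by
  obtain ⟨hQs, hlow⟩ := hs
  have key := weightedHomogeneousComponent_ne_zero_iff_exists_coeff_Qcoeff ha P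
  have hP : P ≠ 0 := by
    rintro rfl
    exact hQs (by simp [Qcoeff])
  obtain ⟨m, d, hmd, hd⟩ := (key _).1 (weightedHomogeneousComponent_minDeg_ne_zero hP)
  have hsm : s ≤ m := not_lt.1 fun hm => hd (by rw [hlow m hm, coeff_zero])
  have hle : s ≤ minDeg N P a := by omega
  refine ⟨hle, fun hsS hdvd => ?_, fun hndvd => ?_⟩
  · obtain rfl : m = s := by omega
    exact X_dvd_iff_forall_mem_support.1 hdvd d (mem_support_iff.2 hd) (by omega)
  · obtain ⟨d, hd, hdz⟩ : ∃ d ∈ (Qcoeff N a P s).support, d (Sum.inr none) = 0 := by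
      simpa using (not_congr X_dvd_iff_forall_mem_support).1 hndvd
    exact le_antisymm hle (minDeg_le ((key s).2 ⟨s, d, by omega, mem_support_iff.1 hd⟩))
end
end

section
/- For a translation invariant polynomial P(z_1,...,z_N), the lowest power s of λ in the expansion of P after substituting z_i = z + λξ_i (i = 1,...,a, Σξ_i = 0) equals S_a, the minimal total degree of P in z_1,...,z_a. -/
open MvPolynomial

noncomputable section

/-!
Substituting `z i ↦ λ z i` for `i < a` splits `P` into its components `P_k` of degree `k` in the
first `a` variables: `P(λ z_A, z_B) = ∑ λ^k P_k(z)`. Translating by the centre `z`, the fused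
expansion becomes `∑ λ^k P_k(ξ, z_B - z)`, so no power below `λ^{S_a}` occurs and the coefficient
of `λ^{S_a}` is `P_{S_a}(ξ, z_B - z)`. Comparing the `λ^{S_a}`-coefficients of
`P(λ (z_A + c), z_B + λ c) = P(λ z_A, z_B)` shows that the lowest component `P_{S_a}` is invariant
under translating `z_A` alone. Sending `ξ i` to `z i` minus the mean of `z_A`, and `z` to `0`, thus
maps `P_{S_a}(ξ, z_B - z)` back to `P_{S_a} ≠ 0`.
-/

section

variable {σ R A : Type*} [CommSemiring R] [CommSemiring A] [Algebra R A]

theorem aeval_X_pow_mul_monomial (w : σ → ℕ) (F : σ → Polynomial A) (m : σ →₀ ℕ) (c : R) :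
    aeval (fun i => Polynomial.X ^ w i * F i) (monomial m c) =
      Polynomial.X ^ Finsupp.weight w m * aeval F (monomial m c) := by
  simp only [aeval_monomial, Finsupp.prod, mul_pow, Finset.prod_mul_distrib, ← pow_mul,
    Finset.prod_pow_eq_pow_sum, Finsupp.weight_apply, Finsupp.sum, smul_eq_mul, mul_comm (w _)]
  ring

theorem coeff_aeval_X_pow_mul_monomial (w : σ → ℕ) (F : σ → Polynomial A) {m : σ →₀ ℕ}
    {k : ℕ} (hk : k ≤ Finsupp.weight w m) (c : R) :
    (aeval (fun i => Polynomial.X ^ w i * F i) (monomial m c)).coeff k =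
      aeval (fun i => (F i).coeff 0) (weightedHomogeneousComponent w k (monomial m c)) := by
  rw [aeval_X_pow_mul_monomial, Polynomial.coeff_X_pow_mul',
    weightedHomogeneousComponent_of_mem (isWeightedHomogeneous_monomial w m c rfl)]
  rcases hk.lt_or_eq with hlt | rfl
  · simp [hlt.not_ge, hlt.ne]
  · simp only [le_refl, if_true, Nat.sub_self, Polynomial.coeff_zero_eq_eval_zero, aeval_monomial,
      Finsupp.prod, Polynomial.eval_mul, Polynomial.eval_prod, Polynomial.eval_pow]
    simp [Polynomial.algebraMap_apply]

theorem coeff_aeval_X_pow_mul (w : σ → ℕ) (F : σ → Polynomial A) {Q : MvPolynomial σ R}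
    {k : ℕ} (hk : ∀ m ∈ Q.support, k ≤ Finsupp.weight w m) :
    (aeval (fun i => Polynomial.X ^ w i * F i) Q).coeff k =
      aeval (fun i => (F i).coeff 0) (weightedHomogeneousComponent w k Q) := by
  conv_lhs => rw [Q.as_sum]
  conv_rhs => rw [Q.as_sum]
  simp only [map_sum, Polynomial.finsetSum_coeff]
  exact Finset.sum_congr rfl fun m hm => coeff_aeval_X_pow_mul_monomial w F (hk m hm) _

end

theorem TransInv.aeval_add {N : ℕ} {P : MvPolynomial (Fin N) ℂ} (hP : TransInv N P)
    {A : Type*} [CommRing A] [Algebra ℂ A] (v : Fin N → A) (t : A) :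
    aeval (fun i => v i + t) P = aeval v P := by
  have universal : aeval (fun i => (X (some i) + X none : MvPolynomial (Option (Fin N)) ℂ)) P =
      rename some P := by
    refine MvPolynomial.funext fun x => ?_
    have := congrArg (aeval (x ∘ some)) (hP (x none))
    show aeval x (aeval _ P) = aeval x (rename some P)
    rw [aeval_rename, ← AlgHom.comp_apply, comp_aeval] at *
    simpa using this
  have := congrArg (aeval fun o => Option.elim o t v) universal
  rw [aeval_rename, ← AlgHom.comp_apply, comp_aeval] at this
  simpa [Function.comp_def] using this

def blockWeight (N a : ℕ) (i : Fin N) : ℕ := if i.val < a then 1 else 0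

theorem weight_blockWeight {N : ℕ} (a : ℕ) (m : Fin N →₀ ℕ) :
    Finsupp.weight (blockWeight N a) m =
      ∑ i ∈ Finset.univ.filter (fun i : Fin N => i.val < a), m i := by
  simp [Finsupp.weight_apply, Finsupp.sum_fintype, blockWeight, Finset.sum_filter]

section Fusion

variable {N a : ℕ} {P : MvPolynomial (Fin N) ℂ}

theorem minDeg_le_weight {m : Fin N →₀ ℕ} (hm : m ∈ P.support) :
    minDeg N P a ≤ Finsupp.weight (blockWeight N a) m :=
  Nat.sInf_le ⟨m, hm, weight_blockWeight a m⟩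

theorem exists_weight_eq_minDeg (hP : P ≠ 0) :
    ∃ m ∈ P.support, Finsupp.weight (blockWeight N a) m = minDeg N P a := by
  obtain ⟨m, hm⟩ := support_nonempty.2 hP
  obtain ⟨m₀, hm₀, h⟩ := Nat.sInf_mem (⟨_, m, hm, rfl⟩ : Set.Nonempty
    {d | ∃ mo ∈ P.support, d = ∑ i ∈ Finset.univ.filter (fun i : Fin N => i.val < a), mo i})
  exact ⟨m₀, hm₀, (weight_blockWeight a m₀).trans h.symm⟩

theorem TransInv.aeval_blockShift_weightedHomogeneousComponent (hP : TransInv N P) {S : ℕ}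
    (hS : ∀ m ∈ P.support, S ≤ Finsupp.weight (blockWeight N a) m)
    {A : Type*} [CommRing A] [Algebra ℂ A] (u : Fin N → A) (c : A) :
    aeval (fun i => if i.val < a then u i + c else u i)
        (weightedHomogeneousComponent (blockWeight N a) S P) =
      aeval u (weightedHomogeneousComponent (blockWeight N a) S P) := by
  have shifted := congrArg (Polynomial.coeff · S)
    (hP.aeval_add (fun i => Polynomial.X ^ blockWeight N a i * Polynomial.C (u i))
      (Polynomial.X * Polynomial.C c))
  have hF : (fun i => Polynomial.X ^ blockWeight N a i * Polynomial.C (u i) +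
        Polynomial.X * Polynomial.C c) = fun i => Polynomial.X ^ blockWeight N a i *
        (if i.val < a then Polynomial.C (u i + c)
          else Polynomial.C (u i) + Polynomial.X * Polynomial.C c) := by
    funext i
    by_cases hi : i.val < a
    · simp only [blockWeight, hi, if_true, pow_one, map_add]
      ring
    · simp [blockWeight, hi]
  simp only [hF, coeff_aeval_X_pow_mul _ _ hS] at shifted
  convert shifted using 3 <;> funext i
  · split_ifs <;> simp
  · simp

def fuseCentred (N a : ℕ) (i : Fin N) : MvPolynomial (FVars N) ℂ :=
  if i.val < a then fuseXi N a i else X (Sum.inr (some i)) - X (Sum.inr none)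

theorem TransInv.coeff_fuse (hP : TransInv N P) {k : ℕ}
    (hk : ∀ m ∈ P.support, k ≤ Finsupp.weight (blockWeight N a) m) :
    (fuse N a P).coeff k =
      aeval (fuseCentred N a) (weightedHomogeneousComponent (blockWeight N a) k P) := by
  have centred := hP.aeval_add (A := Polynomial (MvPolynomial (FVars N) ℂ))
    (fun i => Polynomial.X ^ blockWeight N a i * Polynomial.C (fuseCentred N a i))
    (Polynomial.C (X (Sum.inr none)))
  have hvals : (fun i : Fin N => if i.val < a then
        Polynomial.C (X (Sum.inr none)) + Polynomial.X * Polynomial.C (fuseXi N a i)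
      else Polynomial.C (X (Sum.inr (some i)))) = fun i => Polynomial.X ^ blockWeight N a i *
        Polynomial.C (fuseCentred N a i) + Polynomial.C (X (Sum.inr none)) := by
    funext i
    by_cases hi : i.val < a
    · simp only [blockWeight, fuseCentred, hi, if_true, pow_one]
      ring
    · simp [blockWeight, fuseCentred, hi]
  rw [fuse, hvals, centred, coeff_aeval_X_pow_mul _ _ hk]
  simp

def blockMean (N a : ℕ) : MvPolynomial (Fin N) ℂ :=
  C (((Finset.univ.filter (fun j : Fin N => j.val < a)).card : ℂ)⁻¹) *
    ∑ j ∈ Finset.univ.filter (fun j : Fin N => j.val < a), X j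

theorem sum_sub_blockMean {i : Fin N} (hi : i.val < a) :
    ∑ j ∈ Finset.univ.filter (fun j : Fin N => j.val < a), (X j - blockMean N a) = 0 := by
  have hcard : ((Finset.univ.filter (fun j : Fin N => j.val < a)).card : ℂ) ≠ 0 :=
    Nat.cast_ne_zero.2 (Finset.card_ne_zero.2 ⟨i, by simpa using hi⟩)
  rw [Finset.sum_sub_distrib, Finset.sum_const, blockMean, nsmul_eq_mul, ← mul_assoc,
    ← map_natCast C, ← map_mul, mul_inv_cancel₀ hcard, map_one, one_mul, sub_self]

def recentre (N a : ℕ) : MvPolynomial (FVars N) ℂ →ₐ[ℂ] MvPolynomial (Fin N) ℂ :=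
  aeval (Sum.elim (fun i => X i - blockMean N a) (fun o => o.elim 0 X))

theorem recentre_fuseCentred (i : Fin N) :
    recentre N a (fuseCentred N a i) = if i.val < a then X i - blockMean N a else X i := by
  by_cases hi : i.val < a
  · by_cases hlast : i.val + 1 < a
    · simp [recentre, fuseCentred, fuseXi, hi, hlast]
    · have hsplit : Finset.univ.filter (fun j : Fin N => j.val < a) =
          insert i (Finset.univ.filter (fun j : Fin N => j.val + 1 < a)) := by
        ext j
        simp only [Finset.mem_filter, Finset.mem_univ, true_and, Finset.mem_insert, Fin.ext_iff]
        omega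
      have hsum := sum_sub_blockMean hi
      rw [hsplit, Finset.sum_insert (by simp [hlast])] at hsum
      simp only [recentre, fuseCentred, fuseXi, hi, hlast, if_true, if_false, map_neg, map_sum,
        aeval_X, Sum.elim_inl]
      linear_combination -hsum
  · simp [recentre, fuseCentred, hi]

theorem aeval_fuseCentred_ne_zero {Q : MvPolynomial (Fin N) ℂ}
    (hQ : ∀ c, aeval (fun i => if i.val < a then X i + c else X i) Q = Q) (hQ₀ : Q ≠ 0) :
    aeval (fuseCentred N a) Q ≠ 0 := by
  intro h
  have := congrArg (recentre N a) h
  rw [map_zero, ← AlgHom.comp_apply, comp_aeval] at this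
  simp only [recentre_fuseCentred, sub_eq_add_neg, hQ] at this
  exact hQ₀ this

end Fusion

theorem stmt5_general (N a : ℕ) (P : MvPolynomial (Fin N) ℂ)
    (hP : P ≠ 0) (hTI : TransInv N P) :
    fuse N a P ≠ 0 ∧ (fuse N a P).natTrailingDegree = minDeg N P a := by
  set S := minDeg N P a
  obtain ⟨m₀, hm₀, hweight⟩ := exists_weight_eq_minDeg (a := a) hP
  have hmin : ∀ m ∈ P.support, S ≤ Finsupp.weight (blockWeight N a) m :=
    fun m hm => minDeg_le_weight hm
  have hlowest : (fuse N a P).coeff S ≠ 0 := by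
    rw [hTI.coeff_fuse hmin]
    refine aeval_fuseCentred_ne_zero (fun c => ?_) fun h => ?_
    · rw [hTI.aeval_blockShift_weightedHomogeneousComponent hmin, aeval_X_left_apply]
    · have := congrArg (coeff m₀) h
      rw [coeff_weightedHomogeneousComponent, if_pos hweight, coeff_zero] at this
      exact mem_support_iff.1 hm₀ this
  have hbelow : ∀ k < S, (fuse N a P).coeff k = 0 := fun k hk => by
    rw [hTI.coeff_fuse fun m hm => hk.le.trans (hmin m hm),
      weightedHomogeneousComponent_eq_zero' _ _ fun m hm => (hk.trans_le (hmin m hm)).ne', map_zero]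
  have hfuse : fuse N a P ≠ 0 := fun h => hlowest (by rw [h, Polynomial.coeff_zero])
  exact ⟨hfuse, (Polynomial.natTrailingDegree_le_of_ne_zero hlowest).antisymm
    (Polynomial.le_natTrailingDegree hfuse hbelow)⟩

/-- for a translation invariant polynomial, the lowest power of `λ`
in the fusion expansion equals `S_a`. -/
theorem stmt5 (N a : ℕ) (ha : a ≤ N) (P : MvPolynomial (Fin N) ℂ)
    (hP : P ≠ 0) (hTI : TransInv N P) :
    fuse N a P ≠ 0 ∧ (fuse N a P).natTrailingDegree = minDeg N P a :=
  stmt5_general N a P hP hTI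
end
end

section
/- The polynomial P(x,y,z) = (x - (x+y+z)/3)(y - (x+y+z)/3)(z - (x+y+z)/3) is symmetric, homogeneous of degree 3, translation invariant, has S_1 = 0, S_2 = 0 and S_3 = 3, where S_a is the minimal total degree in the first a variables. In particular S_3 - S_1 = 3 is odd. -/
/-! `Pcex` is the product of the centered variables `X i - mean`, each of which is fixed by
translations and permuted by permutations of the variables. Setting `x = y = 0` leaves
`2 z³ / 27`, so the monomial `z³` occurs, giving `S₁ = S₂ = 0`, while homogeneity forces
`S₃ = 3`. -/

open MvPolynomial

noncomputable section

/-- The counterexample polynomial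
`P = (x - (x+y+z)/3)(y - (x+y+z)/3)(z - (x+y+z)/3)`. -/
def Pcex : MvPolynomial (Fin 3) ℂ :=
  (X 0 - MvPolynomial.C (1/3 : ℂ) * (X 0 + X 1 + X 2)) *
    ((X 1 - MvPolynomial.C (1/3 : ℂ) * (X 0 + X 1 + X 2)) *
      (X 2 - MvPolynomial.C (1/3 : ℂ) * (X 0 + X 1 + X 2)))

section Centered

variable {n : ℕ}

def centeredX (n : ℕ) (i : Fin n) : MvPolynomial (Fin n) ℂ :=
  X i - MvPolynomial.C (1 / n : ℂ) * ∑ j, X j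

lemma rename_centeredX (σ : Equiv.Perm (Fin n)) (i : Fin n) :
    rename σ (centeredX n i) = centeredX n (σ i) := by
  simp only [centeredX, map_sub, map_mul, map_sum, rename_C, rename_X,
    Equiv.sum_comp σ (fun j => (X j : MvPolynomial (Fin n) ℂ))]

lemma symmPoly_prod_centeredX : SymmPoly n (∏ i, centeredX n i) := by
  intro σ
  simp only [map_prod, rename_centeredX]
  exact Equiv.prod_comp σ (centeredX n)

lemma isHomogeneous_centeredX (i : Fin n) : (centeredX n i).IsHomogeneous 1 :=
  (isHomogeneous_X _ _).sub <|
    (IsHomogeneous.sum _ _ _ fun j _ => isHomogeneous_X _ j).C_mul _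

lemma isHomogeneous_prod_centeredX : (∏ i, centeredX n i).IsHomogeneous n := by
  simpa using IsHomogeneous.prod Finset.univ (centeredX n) (fun _ => 1)
    fun i _ => isHomogeneous_centeredX i

lemma aeval_translate_centeredX (hn : n ≠ 0) (c : ℂ) (i : Fin n) :
    aeval (fun j => X j + MvPolynomial.C c) (centeredX n i) = centeredX n i := by
  have hmean : (MvPolynomial.C (1 / n : ℂ) : MvPolynomial (Fin n) ℂ) * n = 1 := by
    rw [← map_natCast MvPolynomial.C, ← map_mul, one_div_mul_cancel (by exact_mod_cast hn),
      map_one]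
  simp only [centeredX, map_sub, map_mul, map_sum, aeval_X, aeval_C, algebraMap_eq,
    Finset.sum_add_distrib, Finset.sum_const, Finset.card_univ, Fintype.card_fin, nsmul_eq_mul]
  linear_combination (-MvPolynomial.C c) * hmean

lemma transInv_prod_centeredX (hn : n ≠ 0) : TransInv n (∏ i, centeredX n i) := by
  intro c
  simp only [map_prod, aeval_translate_centeredX hn]

end Centered

section MinDeg

variable {N : ℕ} {P : MvPolynomial (Fin N) ℂ}

lemma minDeg_eq_zero_of_mem_support {a : ℕ} {mo : Fin N →₀ ℕ} (hmo : mo ∈ P.support)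
    (h : ∀ i : Fin N, i.val < a → mo i = 0) : minDeg N P a = 0 :=
  Nat.sInf_eq_zero.mpr <| Or.inl
    ⟨mo, hmo, (Finset.sum_eq_zero fun i hi => h i (Finset.mem_filter.mp hi).2).symm⟩

lemma minDeg_of_isHomogeneous {d a : ℕ} (hP : P.IsHomogeneous d) (hP0 : P ≠ 0) (ha : N ≤ a) :
    minDeg N P a = d := by
  have hall : Finset.univ.filter (fun i : Fin N => i.val < a) = Finset.univ :=
    Finset.filter_true_of_mem fun i _ => i.isLt.trans_le ha
  have hdeg : ∀ mo ∈ P.support, ∑ i, mo i = d := fun mo hmo => by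
    simpa [Finsupp.weight_apply, Finsupp.sum_fintype] using hP (mem_support_iff.mp hmo)
  obtain ⟨mo₀, hmo₀⟩ := support_nonempty.mpr hP0
  have hset : {e | ∃ mo ∈ P.support, e = ∑ i ∈ Finset.univ.filter
      (fun i : Fin N => i.val < a), mo i} = {d} := by
    ext e
    simp only [hall, Set.mem_ofPred_eq, Set.mem_singleton_iff]
    constructor
    · rintro ⟨mo, hmo, rfl⟩
      exact hdeg mo hmo
    · rintro rfl
      exact ⟨mo₀, hmo₀, (hdeg mo₀ hmo₀).symm⟩
  rw [minDeg, hset, csInf_singleton]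

end MinDeg

lemma Pcex_eq_prod_centeredX : Pcex = ∏ i, centeredX 3 i := by
  simp [Pcex, centeredX, Fin.prod_univ_three, Fin.sum_univ_three, mul_assoc]

lemma coeff_Pcex_single_two_three : Pcex.coeff (Finsupp.single 2 3) = 2 / 27 := by
  simp [Pcex, coeff_mul, coeff_sub, coeff_add, coeff_X,
    Finsupp.antidiagonal_single, Finset.sum_map, Finsupp.single_eq_single_iff,
    Finset.Nat.sum_antidiagonal_eq_sum_range_succ_mk, Finset.sum_range_succ]
  norm_num

/-- `Pcex` is symmetric, homogeneous of degree 3, translation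
invariant, and has `S_1 = 0`, `S_2 = 0`, `S_3 = 3`; in particular
`S_3 - S_1 = 3` is odd. -/
theorem stmt7 :
    SymmPoly 3 Pcex ∧ Pcex.IsHomogeneous 3 ∧ TransInv 3 Pcex ∧
    minDeg 3 Pcex 1 = 0 ∧ minDeg 3 Pcex 2 = 0 ∧ minDeg 3 Pcex 3 = 3 ∧
    Odd (minDeg 3 Pcex 3 - minDeg 3 Pcex 1) := by
  have hz3 : Finsupp.single (2 : Fin 3) 3 ∈ Pcex.support := by
    rw [mem_support_iff, coeff_Pcex_single_two_three]
    norm_num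
  have hz3_off : ∀ a ≤ 2, ∀ i : Fin 3, i.val < a → Finsupp.single (2 : Fin 3) 3 i = 0 :=
    fun a ha i hi => Finsupp.single_eq_of_ne (by omega)
  have hS1 := minDeg_eq_zero_of_mem_support hz3 (hz3_off 1 (by norm_num))
  have hhom : Pcex.IsHomogeneous 3 := Pcex_eq_prod_centeredX ▸ isHomogeneous_prod_centeredX
  have hS3 : minDeg 3 Pcex 3 = 3 :=
    minDeg_of_isHomogeneous hhom (ne_zero_iff.mpr ⟨_, mem_support_iff.mp hz3⟩) le_rfl
  refine ⟨Pcex_eq_prod_centeredX ▸ symmPoly_prod_centeredX, hhom,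
    Pcex_eq_prod_centeredX ▸ transInv_prod_centeredX three_ne_zero, hS1,
    minDeg_eq_zero_of_mem_support hz3 (hz3_off 2 le_rfl), hS3, ?_⟩
  rw [hS3, hS1]
  exact ⟨1, rfl⟩
end
end

section
/- Let Φ_m(z_1,...,z_N) = ∏_{i<j}(z_i-z_j)^m for a positive integer m. Then the minimal total degree of Φ_m in z_1,...,z_a equals m·a(a-1)/2, i.e. the pattern of zeros of the Laughlin polynomial is S_a = m·binomial(a,2). -/
open MvPolynomial

noncomputable section

/-! The minimal degree in `z₁, …, z_a` is the weighted order of `Φ_m`, viewed as a power series,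
for the weight that is `1` on the first `a` variables and `0` on the others. Over a domain the
weighted order is additive on products, and the factor `z_i - z_j` with `i < j` has order `1`
exactly when `j < a`; the pairs `i < j < a` number `a.choose 2`. -/

namespace MvPowerSeries

variable {σ R : Type*}

theorem weightedOrder_X [Semiring R] [Nontrivial R] (w : σ → ℕ) (i : σ) :
    (X i : MvPowerSeries σ R).weightedOrder w = w i := by
  rw [X, weightedOrder_monomial_of_ne_zero w one_ne_zero, Finsupp.weight_single, one_smul]

theorem weightedOrder_X_sub_X [Ring R] [Nontrivial R] (w : σ → ℕ) {i j : σ} (hij : i ≠ j) :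
    (X i - X j : MvPowerSeries σ R).weightedOrder w = min (w i : ℕ∞) (w j) := by
  classical
  refine le_antisymm (le_min ?_ ?_) ?_
  · simpa [Finsupp.weight_single] using weightedOrder_le w (f := X i - X j)
      (d := Finsupp.single i 1) (by simp [coeff_X, Finsupp.single_left_inj one_ne_zero, hij])
  · simpa [Finsupp.weight_single] using weightedOrder_le w (f := X i - X j)
      (d := Finsupp.single j 1) (by simp [coeff_X, Finsupp.single_left_inj one_ne_zero, hij.symm])
  · rw [sub_eq_add_neg]
    have := min_weightedOrder_le_add w (f := (X i : MvPowerSeries σ R)) (g := -X j)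
    rwa [weightedOrder_neg, weightedOrder_X, weightedOrder_X] at this

theorem weightedOrder_pow [CommSemiring R] [NoZeroDivisors R] [Nontrivial R] (w : σ → ℕ)
    (f : MvPowerSeries σ R) (n : ℕ) :
    (f ^ n).weightedOrder w = n • f.weightedOrder w := by
  simpa using weightedOrder_prod w (fun _ => f) (Finset.range n)

end MvPowerSeries

theorem MvPolynomial.sInf_weight_support_eq_toNat_weightedOrder {σ R : Type*} [CommSemiring R]
    (w : σ → ℕ) (P : MvPolynomial σ R) :
    sInf {d | ∃ mo ∈ P.support, d = Finsupp.weight w mo} =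
      ((P : MvPowerSeries σ R).weightedOrder w).toNat := by
  rcases eq_or_ne P 0 with rfl | hP
  · simp
  have hne : {d | ∃ mo ∈ P.support, d = Finsupp.weight w mo}.Nonempty := by
    obtain ⟨mo, hmo⟩ := support_nonempty.mpr hP
    exact ⟨_, mo, hmo, rfl⟩
  obtain ⟨mo, hmo, hmin⟩ := Nat.sInf_mem hne
  suffices (P : MvPowerSeries σ R).weightedOrder w = Finsupp.weight w mo by
    rw [this, ENat.toNat_natCast, hmin]
  refine (MvPowerSeries.weightedOrder_eq_nat w).mpr ⟨⟨mo, ?_, rfl⟩, fun d hd => ?_⟩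
  · rwa [coeff_coe, ← mem_support_iff]
  · rw [coeff_coe, ← notMem_support_iff]
    exact fun hd' => hd.not_ge (hmin ▸ Nat.sInf_le ⟨d, hd', rfl⟩)

section Laughlin

variable {N a : ℕ}

def firstVarsWeight (a : ℕ) (i : Fin N) : ℕ := if (i : ℕ) < a then 1 else 0

theorem firstVarsWeight_antitone : Antitone (firstVarsWeight (N := N) a) := by
  intro i j hij
  unfold firstVarsWeight
  split_ifs <;> omega

theorem minDeg_eq_toNat_weightedOrder (P : MvPolynomial (Fin N) ℂ) :
    minDeg N P a = ((P : MvPowerSeries (Fin N) ℂ).weightedOrder (firstVarsWeight a)).toNat := by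
  rw [← sInf_weight_support_eq_toNat_weightedOrder, minDeg]
  congr! 5 with d mo
  simp [Finsupp.weight_eq_sum, firstVarsWeight, Finset.sum_filter]

open Finset in
theorem card_filter_lt_and_snd_lt (ha : a ≤ N) :
    #{p : Fin N × Fin N | p.1 < p.2 ∧ (p.2 : ℕ) < a} = a.choose 2 := by
  calc _ = #{p : Fin a × Fin a | p.1 < p.2} := by
        refine Finset.card_bij' (fun p hp => (⟨p.1, ?_⟩, ⟨p.2, ?_⟩))
          (fun p _ => (Fin.castLE ha p.1, Fin.castLE ha p.2)) ?_ ?_ ?_ ?_ <;>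
          simp_all; omega
    _ = a.choose 2 := by simpa using Fintype.card_product_filter_lt (α := Fin a)

end Laughlin

theorem stmt15_general (N m a : ℕ) (ha : a ≤ N) :
    minDeg N (∏ p ∈ Finset.univ.filter (fun p : Fin N × Fin N => p.1 < p.2),
      (X p.1 - X p.2) ^ m) a = m * a.choose 2 := by
  have hfactor : ∀ p ∈ Finset.univ.filter (fun p : Fin N × Fin N => p.1 < p.2),
      (coeToMvPowerSeries.ringHom ((X p.1 - X p.2) ^ m : MvPolynomial (Fin N) ℂ)).weightedOrder
        (firstVarsWeight a) = ((m * firstVarsWeight a p.2 : ℕ) : ℕ∞) := by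
    intro p hp
    have hlt := (Finset.mem_filter.mp hp).2
    rw [map_pow, map_sub, coeToMvPowerSeries.ringHom_apply, coeToMvPowerSeries.ringHom_apply,
      coe_X, coe_X, MvPowerSeries.weightedOrder_pow, MvPowerSeries.weightedOrder_X_sub_X _ hlt.ne,
      min_eq_right (by exact_mod_cast firstVarsWeight_antitone hlt.le), nsmul_eq_mul, Nat.cast_mul]
  rw [minDeg_eq_toNat_weightedOrder, ← coeToMvPowerSeries.ringHom_apply, map_prod,
    MvPowerSeries.weightedOrder_prod, Finset.sum_congr rfl hfactor, ← Nat.cast_sum,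
    ENat.toNat_natCast, ← Finset.mul_sum, ← card_filter_lt_and_snd_lt ha]
  simp [firstVarsWeight, Finset.sum_boole, Finset.filter_filter]

/-- the pattern of zeros of the Laughlin polynomial
`Φ_m = ∏_{i<j} (z_i - z_j)^m` is `S_a = m * C(a,2)`. -/
theorem stmt15 (N m a : ℕ) (hm : 0 < m) (ha : a ≤ N) :
    minDeg N (∏ p ∈ Finset.univ.filter (fun p : Fin N × Fin N => p.1 < p.2),
      (X p.1 - X p.2) ^ m) a = m * a.choose 2 :=
  stmt15_general N m a ha
end
end

section
/- Let Φ_m(z_1,...,z_N) = ∏_{i<j}(z_i-z_j)^m. The derived polynomial of Φ_m under fusing z_1,...,z_a to z^{(a)} is ∏_{i=a+1}^N (z^{(a)} - z_i)^{ma} · ∏_{a+1 ≤ i < j ≤ N}(z_i - z_j)^m, up to a nonzero scalar factor depending only on ξ. -/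
open MvPolynomial

noncomputable section

/-!
For `i < j < a` the factor `z_i - z_j` becomes `λ (ξ_i - ξ_j)`, so these `a.choose 2` factors
contribute exactly `λ ^ (m * a.choose 2) * R(ξ)`. The remaining factors are polynomials in `λ`,
so the coefficient of `λ ^ (m * a.choose 2)` in the whole product is `R(ξ)` times their value at
`λ = 0`, where every `z_i` with `i < a` collapses to the fused variable `z^{(a)}`.
-/

open Finset

lemma Fin.card_filter_lt_and_snd_val_lt (N a : ℕ) :
    #{p : Fin N × Fin N | p.1 < p.2 ∧ p.2.val < a} = (min N a).choose 2 := by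
  rw [← Fin.card_filter_val_lt, ← card_product_filter_lt]
  congr 1
  ext p
  simp only [mem_filter, mem_univ, true_and, mem_product, Fin.lt_def]
  omega

section Fusion

variable {N a : ℕ}

lemma fuse_X_of_lt {i : Fin N} (hi : i.val < a) :
    fuse N a (X i) =
      Polynomial.C (X (Sum.inr none)) + Polynomial.X * Polynomial.C (fuseXi N a i) := by
  simp [fuse, hi]

lemma fuse_X_of_le {i : Fin N} (hi : a ≤ i.val) :
    fuse N a (X i) = Polynomial.C (X (Sum.inr (some i))) := by
  simp [fuse, hi.not_gt]

lemma fuse_X_sub_fuse_X_of_lt {i j : Fin N} (hi : i.val < a) (hj : j.val < a) :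
    fuse N a (X i) - fuse N a (X j) =
      Polynomial.X * Polynomial.C (fuseXi N a i - fuseXi N a j) := by
  rw [fuse_X_of_lt hi, fuse_X_of_lt hj, map_sub]
  ring

lemma eval_zero_fuse_X (i : Fin N) :
    (fuse N a (X i)).eval 0 = if i.val < a then X (Sum.inr none) else X (Sum.inr (some i)) := by
  split_ifs with hi
  · simp [fuse_X_of_lt hi]
  · simp [fuse_X_of_le (not_lt.mp hi)]

lemma fuse_prod_fused_pairs (m : ℕ) (ha : a ≤ N) :
    fuse N a (∏ p ∈ univ.filter (fun p : Fin N × Fin N => p.1 < p.2 ∧ p.2.val < a),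
        (X p.1 - X p.2) ^ m) =
      Polynomial.X ^ (m * a.choose 2) *
        Polynomial.C (∏ p ∈ univ.filter (fun p : Fin N × Fin N => p.1 < p.2 ∧ p.2.val < a),
          (fuseXi N a p.1 - fuseXi N a p.2) ^ m) := by
  have hcard := Fin.card_filter_lt_and_snd_val_lt N a
  rw [min_eq_right ha] at hcard
  rw [map_prod (fuse N a), ← hcard, pow_mul, ← prod_const (Polynomial.X ^ m),
    map_prod Polynomial.C, ← prod_mul_distrib]
  refine prod_congr rfl fun p hp => ?_
  obtain ⟨hlt, h2⟩ := (mem_filter.mp hp).2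
  rw [map_pow, map_sub, fuse_X_sub_fuse_X_of_lt ((Fin.lt_def.mp hlt).trans h2) h2, mul_pow,
    map_pow]

lemma eval_zero_fuse_prod_unfused_pairs (m : ℕ) (ha : a ≤ N) :
    (∏ p ∈ univ.filter (fun p : Fin N × Fin N => p.1 < p.2 ∧ ¬ p.2.val < a),
        fuse N a ((X p.1 - X p.2) ^ m)).eval 0 =
      (∏ j ∈ univ.filter (fun j : Fin N => a ≤ j.val),
          (X (Sum.inr none) - X (Sum.inr (some j)) : MvPolynomial (FVars N) ℂ) ^ (m * a)) *
        ∏ p ∈ univ.filter (fun p : Fin N × Fin N => a ≤ p.1.val ∧ p.1 < p.2),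
          (X (Sum.inr (some p.1)) - X (Sum.inr (some p.2))) ^ m := by
  simp only [Polynomial.eval_prod, map_pow, map_sub, Polynomial.eval_pow, Polynomial.eval_sub,
    eval_zero_fuse_X]
  rw [← prod_filter_mul_prod_filter_not _ (fun p : Fin N × Fin N => p.1.val < a), filter_filter,
    filter_filter]
  congr 1
  · have hprod :
        univ.filter (fun p : Fin N × Fin N => (p.1 < p.2 ∧ ¬ p.2.val < a) ∧ p.1.val < a) =
        univ.filter (fun i : Fin N => i.val < a) ×ˢ
          univ.filter (fun j : Fin N => a ≤ j.val) := by
      ext p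
      simp only [mem_filter, mem_univ, true_and, mem_product, Fin.lt_def]
      omega
    rw [hprod, prod_product, prod_comm]
    dsimp only
    refine prod_congr rfl fun j hj => ?_
    have hj' : ¬ j.val < a := (mem_filter.mp hj).2.not_gt
    rw [prod_congr rfl fun i hi => by rw [if_pos (mem_filter.mp hi).2, if_neg hj'], prod_const,
      Fin.card_filter_val_lt, min_eq_right ha, pow_mul]
  · refine prod_congr (by ext p; simp only [mem_filter, mem_univ, true_and, Fin.lt_def]; omega)
      fun p hp => ?_
    obtain ⟨h1, h12⟩ := (mem_filter.mp hp).2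
    rw [if_neg h1.not_gt, if_neg (h1.trans_lt h12).not_gt]

end Fusion

theorem stmt16_general (N m a : ℕ) (ha : a ≤ N) :
    Qcoeff N a (∏ p ∈ Finset.univ.filter (fun p : Fin N × Fin N => p.1 < p.2),
        (X p.1 - X p.2) ^ m) (m * a.choose 2) =
      (∏ p ∈ Finset.univ.filter
          (fun p : Fin N × Fin N => p.1 < p.2 ∧ p.2.val < a),
        (fuseXi N a p.1 - fuseXi N a p.2) ^ m) *
      ((∏ j ∈ Finset.univ.filter (fun j : Fin N => a ≤ j.val),
          (X (Sum.inr none) - X (Sum.inr (some j)) : MvPolynomial (FVars N) ℂ) ^ (m * a)) *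
        ∏ p ∈ Finset.univ.filter
            (fun p : Fin N × Fin N => a ≤ p.1.val ∧ p.1 < p.2),
          (X (Sum.inr (some p.1)) - X (Sum.inr (some p.2))) ^ m) := by
  have hsplit := prod_filter_mul_prod_filter_not (univ.filter fun p : Fin N × Fin N => p.1 < p.2)
    (fun p => p.2.val < a) (fun p => (X p.1 - X p.2 : MvPolynomial (Fin N) ℂ) ^ m)
  rw [filter_filter, filter_filter] at hsplit
  rw [Qcoeff, ← hsplit, map_mul, fuse_prod_fused_pairs m ha, mul_assoc,
    Polynomial.coeff_X_pow_mul', if_pos le_rfl, Nat.sub_self, Polynomial.coeff_C_mul,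
    Polynomial.coeff_zero_eq_eval_zero, map_prod, eval_zero_fuse_prod_unfused_pairs m ha]

/-- the derived polynomial of the Laughlin polynomial `Φ_m` under
fusing `z_1, ..., z_a` into `z^{(a)}` is
`∏_{j ≥ a} (z^{(a)} - z_j)^{m a} ∏_{a ≤ i < j} (z_i - z_j)^m`, with the scalar
(`ξ`-dependent) factor `R(ξ) = ∏_{i<j<a} (ξ_i - ξ_j)^m`. -/
theorem stmt16 (N m a : ℕ) (hm : 0 < m) (ha : a ≤ N) :
    Qcoeff N a (∏ p ∈ Finset.univ.filter (fun p : Fin N × Fin N => p.1 < p.2),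
        (X p.1 - X p.2) ^ m) (m * a.choose 2) =
      (∏ p ∈ Finset.univ.filter
          (fun p : Fin N × Fin N => p.1 < p.2 ∧ p.2.val < a),
        (fuseXi N a p.1 - fuseXi N a p.2) ^ m) *
      ((∏ j ∈ Finset.univ.filter (fun j : Fin N => a ≤ j.val),
          (X (Sum.inr none) - X (Sum.inr (some j)) : MvPolynomial (FVars N) ℂ) ^ (m * a)) *
        ∏ p ∈ Finset.univ.filter
            (fun p : Fin N × Fin N => a ≤ p.1.val ∧ p.1 < p.2),
          (X (Sum.inr (some p.1)) - X (Sum.inr (some p.2))) ^ m) :=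
  stmt16_general N m a ha
end
end
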